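/- arXiv:1205.5148 — 7 statements merged into one kernel-verified Lean document; each statement's English description precedes it below -/
import Mathlib

section
/- Let F_q be a finite field, E a field extension of F_q of degree m, φ : E → F_q^m an F_q-linear bijection, and Φ : E^n → F_q^{nm} the induced base-field expansion. Let 0 < k < n and ℓ ≥ 1, set t = ⌊(n−k)/(2ℓ)⌋ and assume t ≥ 1, and let C ⊆ E^n be a code with minimum Hamming distance at least n−k+1. Then Φ(C) corrects any ℓ bursts of length at most m(t−1)+1 each: for all c, c′ ∈ C and all e, e′ ∈ F_q^{nm} whose supports are each covered by a union of ℓ sets of m(t−1)+1 contiguous coordinates, Φ(c) + e = Φ(c′) + e′ implies c = c′. -/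
/-- The linear (row-major) index of position `j` in the `i`-th block of length `m`. -/
def finIdx {n m : ℕ} (i : Fin n) (j : Fin m) : Fin (n * m) :=
  ⟨i.1 * m + j.1, by
    have h1 : i.1 + 1 ≤ n := i.2
    have h2 : j.1 < m := j.2
    calc i.1 * m + j.1 < (i.1 + 1) * m := by nlinarith
      _ ≤ n * m := Nat.mul_le_mul_right m h1⟩

/-- `ℓ` bursts of length (at most) `L` each: a vector whose support is covered by a
union of `ℓ` sets of `L` contiguous coordinates. -/
def IsBurstUnion {F : Type*} [Zero F] {M : ℕ} (ℓ L : ℕ) (e : Fin M → F) : Prop :=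
  ∃ p : Fin ℓ → ℕ, ∀ a : Fin M, e a ≠ 0 → ∃ i : Fin ℓ, p i ≤ (a : ℕ) ∧ (a : ℕ) < p i + L

/-- The base-field expansion of a code `C ⊆ E^n` of minimum distance
at least `n - k + 1` corrects any `ℓ` bursts of length at most `m(t-1)+1` each,
where `t = ⌊(n-k)/(2ℓ)⌋ ≥ 1`. -/
theorem expansion_corrects_multiple_bursts {F E : Type*} [Field F] [Fintype F] [DecidableEq F]
    [Field E] [Algebra F E] [DecidableEq E]
    (m n k ℓ t : ℕ) (hm : Module.finrank F E = m)
    (φ : E ≃ₗ[F] (Fin m → F))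
    (Φ : (Fin n → E) → (Fin (n * m) → F))
    (hΦ : ∀ (v : Fin n → E) (i : Fin n) (j : Fin m), Φ v (finIdx i j) = φ (v i) j)
    (hk : 0 < k) (hkn : k < n) (hℓ : 1 ≤ ℓ) (ht : t = (n - k) / (2 * ℓ)) (ht1 : 1 ≤ t)
    (C : Set (Fin n → E))
    (hC : ∀ c ∈ C, ∀ c' ∈ C, c ≠ c' → n - k + 1 ≤ hammingDist c c') :
    ∀ c ∈ C, ∀ c' ∈ C, ∀ e e' : Fin (n * m) → F,
      IsBurstUnion ℓ (m * (t - 1) + 1) e → IsBurstUnion ℓ (m * (t - 1) + 1) e' →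
      Φ c + e = Φ c' + e' → c = c' := by
  intro c hc c' hc' e e' he he' heq
  by_contra hne
  have hm0 : 0 < m := by
    rcases Nat.eq_zero_or_pos m with h | h
    · exfalso
      subst h
      exact one_ne_zero (φ.injective (Subsingleton.elim _ _) : (1 : E) = 0)
    · exact h
  obtain ⟨p, hp⟩ := he
  obtain ⟨p', hp'⟩ := he'
  set q : Fin ℓ ⊕ Fin ℓ → ℕ := Sum.elim p p' with hq
  set D : Finset (Fin n) := Finset.univ.filter (fun i => c i ≠ c' i) with hD
  have key : ∀ i ∈ D, ∃ s, i.1 ∈ Finset.Icc (q s / m) ((q s + m * (t - 1)) / m) := by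
    intro i hi
    have hci : c i ≠ c' i := (Finset.mem_filter.mp hi).2
    have hne2 : φ (c i) ≠ φ (c' i) := fun h => hci (φ.injective h)
    obtain ⟨j, hj⟩ : ∃ j, φ (c i) j ≠ φ (c' i) j := by
      by_contra h; push_neg at h; exact hne2 (funext h)
    set a := finIdx i j with ha
    have h1 : Φ c a ≠ Φ c' a := by rw [ha, hΦ, hΦ]; exact hj
    have h2 : Φ c a + e a = Φ c' a + e' a := congrFun heq a
    have h3 : e a ≠ 0 ∨ e' a ≠ 0 := by
      by_contra h; push_neg at h
      rw [h.1, h.2, add_zero, add_zero] at h2; exact h1 h2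
    have hav : (a : ℕ) = i.1 * m + j.1 := rfl
    have hadiv : (a : ℕ) / m = i.1 := by
      rw [hav, Nat.mul_comm, Nat.mul_add_div hm0, Nat.div_eq_of_lt j.2, Nat.add_zero]
    obtain ⟨s, hs1, hs2⟩ : ∃ s : Fin ℓ ⊕ Fin ℓ,
        q s ≤ (a : ℕ) ∧ (a : ℕ) < q s + (m * (t - 1) + 1) := by
      rcases h3 with h | h
      · obtain ⟨s, hs⟩ := hp a h; exact ⟨Sum.inl s, hs⟩
      · obtain ⟨s, hs⟩ := hp' a h; exact ⟨Sum.inr s, hs⟩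
    refine ⟨s, Finset.mem_Icc.mpr ⟨?_, ?_⟩⟩
    · rw [← hadiv]; exact Nat.div_le_div_right hs1
    · rw [← hadiv]; exact Nat.div_le_div_right (by omega)
  have hIcc : ∀ s : Fin ℓ ⊕ Fin ℓ,
      (Finset.Icc (q s / m) ((q s + m * (t - 1)) / m)).card = t := by
    intro s
    rw [Nat.card_Icc, Nat.add_mul_div_left _ _ hm0]
    omega
  have hcard : D.card ≤ (ℓ + ℓ) * t := by
    have hsub : D.image Fin.val ⊆ Finset.univ.biUnion
        (fun s : Fin ℓ ⊕ Fin ℓ => Finset.Icc (q s / m) ((q s + m * (t - 1)) / m)) := by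
      intro x hx
      obtain ⟨i, hi, rfl⟩ := Finset.mem_image.mp hx
      obtain ⟨s, hs⟩ := key i hi
      exact Finset.mem_biUnion.mpr ⟨s, Finset.mem_univ s, hs⟩
    calc D.card = (D.image Fin.val).card :=
          (Finset.card_image_of_injective D Fin.val_injective).symm
      _ ≤ (Finset.univ.biUnion
            (fun s : Fin ℓ ⊕ Fin ℓ => Finset.Icc (q s / m) ((q s + m * (t - 1)) / m))).card :=
          Finset.card_le_card hsub
      _ ≤ ∑ s : Fin ℓ ⊕ Fin ℓ,
            (Finset.Icc (q s / m) ((q s + m * (t - 1)) / m)).card :=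
          Finset.card_biUnion_le
      _ = ∑ _s : Fin ℓ ⊕ Fin ℓ, t := by
          exact Finset.sum_congr rfl (fun s _ => hIcc s)
      _ = (ℓ + ℓ) * t := by simp [Finset.card_univ, mul_comm]
  have hdist : n - k + 1 ≤ D.card := by
    have h := hC c hc c' hc' hne
    simpa [hammingDist, hD] using h
  have h2t : (ℓ + ℓ) * t ≤ n - k := by
    calc (ℓ + ℓ) * t = (n - k) / (2 * ℓ) * (2 * ℓ) := by rw [ht]; ring
      _ ≤ n - k := Nat.div_mul_le_self _ _
  omega
end

section
/- Let F_q be a finite field, E a field extension of F_q of degree m where m = s² is a perfect square, φ an F_q-linear bijection from E to the s × s matrices over F_q, n₁, n₂ positive integers with n₁n₂ = n, and Φ₂ : E^n → (n₁s × n₂s matrices over F_q) the two-dimensional expansion: the ((r−1)s+u, (c−1)s+v) entry of Φ₂(x) is the (u,v) entry of φ(x_{(r−1)n₂+c}). Let 0 < k < n, assume ⌊√(⌊(n−k)/2⌋)⌋ ≥ 1, and let C ⊆ E^n have minimum Hamming distance at least n−k+1. Set x = s·(⌊√(⌊(n−k)/2⌋)⌋ − 1) + 1. Then Φ₂(C)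 corrects any single square burst of side at most x: for all c, c′ ∈ C and all n₁s × n₂s matrices e, e′ over F_q whose supports are each contained in some x × x square of contiguous rows and columns, Φ₂(c) + e = Φ₂(c′) + e′ implies c = c′. -/
/-- A square burst of side (at most) `x`: a matrix whose support is contained in
some `x × x` square of contiguous rows and columns. -/
def IsSquareBurst {F : Type*} [Zero F] {R C : ℕ} (x : ℕ) (e : Matrix (Fin R) (Fin C) F) : Prop :=
  ∃ p q : ℕ, ∀ i j, e i j ≠ 0 →
    p ≤ (i : ℕ) ∧ (i : ℕ) < p + x ∧ q ≤ (j : ℕ) ∧ (j : ℕ) < q + x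

/-- The two-dimensional expansion (via an `F`-linear bijection
`φ : E ≃ Mat_{s×s}(F)`, `m = s²`) of a code `C ⊆ E^n` of minimum distance at least
`n - k + 1` corrects any single square burst of side at most
`x = s(⌊√⌊(n-k)/2⌋⌋ - 1) + 1`. -/
theorem matrix_expansion_corrects_single_square_burst
    {F E : Type*} [Field F] [Fintype F] [DecidableEq F]
    [Field E] [Algebra F E] [DecidableEq E]
    (m s n n₁ n₂ k : ℕ) (hms : m = s ^ 2) (hm : Module.finrank F E = m)
    (hn₁ : 0 < n₁) (hn₂ : 0 < n₂) (hn : n₁ * n₂ = n)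
    (φ : E ≃ₗ[F] Matrix (Fin s) (Fin s) F)
    (Φ₂ : (Fin n → E) → Matrix (Fin (n₁ * s)) (Fin (n₂ * s)) F)
    (hΦ : ∀ (x : Fin n → E) (r : Fin n₁) (c : Fin n₂) (u v : Fin s),
      Φ₂ x (finIdx r u) (finIdx c v) = φ (x (Fin.cast hn (finIdx r c))) u v)
    (hk : 0 < k) (hkn : k < n)
    (hsq : 1 ≤ Nat.sqrt ((n - k) / 2))
    (C : Set (Fin n → E))
    (hC : ∀ c ∈ C, ∀ c' ∈ C, c ≠ c' → n - k + 1 ≤ hammingDist c c') :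
    ∀ c ∈ C, ∀ c' ∈ C, ∀ e e' : Matrix (Fin (n₁ * s)) (Fin (n₂ * s)) F,
      IsSquareBurst (s * (Nat.sqrt ((n - k) / 2) - 1) + 1) e →
      IsSquareBurst (s * (Nat.sqrt ((n - k) / 2) - 1) + 1) e' →
      Φ₂ c + e = Φ₂ c' + e' → c = c' := by
  intro c hc c' hc' e e' hbe hbe' heq
  obtain ⟨p, q, hb⟩ := hbe
  obtain ⟨p', q', hb'⟩ := hbe'
  by_contra hne
  have hd := hC c hc c' hc' hne
  set t := Nat.sqrt ((n - k) / 2) with ht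
  have hs : 0 < s := by
    rcases Nat.eq_zero_or_pos s with h | h
    · exfalso
      subst h
      exact zero_ne_one (φ.injective (Subsingleton.elim _ _))
    · exact h
  -- key block lemma: a coordinate inside the burst interval pins down the block index
  have key : ∀ (P r : ℕ) (u : Fin s), P ≤ r * s + u.1 →
      r * s + u.1 < P + (s * (t - 1) + 1) → P / s ≤ r ∧ r < P / s + t := by
    intro P r u h1 h2
    have hu := u.2
    have hst : s * (t - 1) + s = s * t := by
      rw [← Nat.mul_succ, Nat.succ_eq_add_one, Nat.sub_add_cancel hsq]
    have hdm := Nat.div_add_mod P s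
    have hmlt := Nat.mod_lt P hs
    constructor
    · have hPr : P < (r + 1) * s := by nlinarith
      exact Nat.lt_succ_iff.mp ((Nat.div_lt_iff_lt_mul hs).mpr hPr)
    · have hlt : r * s < (P / s + t) * s := by
        have hx : (P / s + t) * s = s * (P / s) + s * t := by
          rw [Nat.add_mul, Nat.mul_comm t s, Nat.mul_comm (P / s) s]
        rw [hx]
        linarith
      exact Nat.lt_of_mul_lt_mul_right hlt
  classical
  set D : Finset (Fin n) := Finset.univ.filter (fun i => c i ≠ c' i) with hD
  set S : Finset (ℕ × ℕ) :=
    (Finset.Ico (p / s) (p / s + t) ×ˢ Finset.Ico (q / s) (q / s + t)) ∪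
    (Finset.Ico (p' / s) (p' / s + t) ×ˢ Finset.Ico (q' / s) (q' / s + t)) with hS
  have hg : ∀ i ∈ D, ((i : ℕ) / n₂, (i : ℕ) % n₂) ∈ S := by
    intro i hi
    have hci : c i ≠ c' i := by simpa [hD] using hi
    have hib : (i : ℕ) < n₁ * n₂ := by rw [hn]; exact i.2
    set r : Fin n₁ := ⟨(i : ℕ) / n₂, (Nat.div_lt_iff_lt_mul hn₂).mpr (by omega)⟩ with hr
    set cc : Fin n₂ := ⟨(i : ℕ) % n₂, Nat.mod_lt _ hn₂⟩ with hcc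
    have hidx : Fin.cast hn (finIdx r cc) = i := by
      apply Fin.ext
      simp only [Fin.coe_cast, finIdx, hr, hcc]
      exact Nat.div_add_mod' (i : ℕ) n₂
    have hφ : φ (c i) ≠ φ (c' i) := fun h => hci (φ.injective h)
    have huv : ∃ u v : Fin s, φ (c i) u v ≠ φ (c' i) u v := by
      by_contra hcon
      push_neg at hcon
      exact hφ (Matrix.ext hcon)
    obtain ⟨u, v, huv⟩ := huv
    have hentry := congrFun (congrFun heq (finIdx r u)) (finIdx cc v)
    simp only [Matrix.add_apply, hΦ, hidx] at hentry
    have hee : e (finIdx r u) (finIdx cc v) ≠ 0 ∨ e' (finIdx r u) (finIdx cc v) ≠ 0 := by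
      by_contra hcon
      push_neg at hcon
      rw [hcon.1, hcon.2] at hentry
      exact huv (by simpa using hentry)
    have hval1 : ((finIdx r u : Fin (n₁ * s)) : ℕ) = r.1 * s + u.1 := rfl
    have hval2 : ((finIdx cc v : Fin (n₂ * s)) : ℕ) = cc.1 * s + v.1 := rfl
    rcases hee with h0 | h0
    · obtain ⟨h1, h2, h3, h4⟩ := hb _ _ h0
      rw [hval1] at h1 h2; rw [hval2] at h3 h4
      obtain ⟨ha, hb2⟩ := key p r.1 u h1 h2
      obtain ⟨hc2, hd2⟩ := key q cc.1 v h3 h4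
      exact Finset.mem_union_left _ (by
        simp only [Finset.mem_product, Finset.mem_Ico]
        exact ⟨⟨ha, hb2⟩, ⟨hc2, hd2⟩⟩)
    · obtain ⟨h1, h2, h3, h4⟩ := hb' _ _ h0
      rw [hval1] at h1 h2; rw [hval2] at h3 h4
      obtain ⟨ha, hb2⟩ := key p' r.1 u h1 h2
      obtain ⟨hc2, hd2⟩ := key q' cc.1 v h3 h4
      exact Finset.mem_union_right _ (by
        simp only [Finset.mem_product, Finset.mem_Ico]
        exact ⟨⟨ha, hb2⟩, ⟨hc2, hd2⟩⟩)
  have hinj : ∀ i ∈ D, ∀ j ∈ D,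
      ((i : ℕ) / n₂, (i : ℕ) % n₂) = ((j : ℕ) / n₂, (j : ℕ) % n₂) → i = j := by
    intro i _ j _ hij
    apply Fin.ext
    have e1 : (i : ℕ) / n₂ = (j : ℕ) / n₂ := congrArg Prod.fst hij
    have e2 : (i : ℕ) % n₂ = (j : ℕ) % n₂ := congrArg Prod.snd hij
    calc (i : ℕ) = n₂ * ((i : ℕ) / n₂) + (i : ℕ) % n₂ := (Nat.div_add_mod _ _).symm
      _ = n₂ * ((j : ℕ) / n₂) + (j : ℕ) % n₂ := by rw [e1, e2]
      _ = j := Nat.div_add_mod _ _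
  have hcard : D.card ≤ S.card := Finset.card_le_card_of_injOn _ hg hinj
  have hScard : S.card ≤ t * t + t * t := by
    refine le_trans (Finset.card_union_le _ _) ?_
    simp only [Finset.card_product, Nat.card_Ico, Nat.add_sub_cancel_left]
    omega
  have hDd : hammingDist c c' = D.card := rfl
  have hts : t * t ≤ (n - k) / 2 := Nat.sqrt_le _
  omega
end

section
/- Let F_q be a finite field, E a field extension of F_q of degree m where m = s² is a perfect square, φ an F_q-linear bijection from E to the s × s matrices over F_q, n₁, n₂ positive integers with n₁n₂ = n, and Φ₂ : E^n → (n₁s × n₂s matrices over F_q) the two-dimensional expansion. Let 0 < k < n, ℓ ≥ 1, assume ⌊√(⌊(n−k)/(2ℓ)⌋)⌋ ≥ 1, and let C ⊆ E^n have minimum Hamming distance at least n−k+1. Set x = s·(⌊√(⌊(n−k)/(2ℓ)⌋)⌋ − 1) + 1. Then Φ₂(C) corrects any ℓ square bursts of side at most x each: for all c, c′ ∈ C and all n₁s × n₂s matrices e, e′ over F_q whose supports are each covered by a union of ℓ squares of side x with contiguous rows and columns, Φ₂(c) + e = Φ₂(c′) + e′ implies c = c′. -/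
/-- `ℓ` square bursts of side (at most) `x` each: a matrix whose support is covered
by a union of `ℓ` squares of side `x` with contiguous rows and columns. -/
def IsSquareBurstUnion {F : Type*} [Zero F] {R C : ℕ} (ℓ x : ℕ)
    (e : Matrix (Fin R) (Fin C) F) : Prop :=
  ∃ p q : Fin ℓ → ℕ, ∀ i j, e i j ≠ 0 → ∃ t : Fin ℓ,
    p t ≤ (i : ℕ) ∧ (i : ℕ) < p t + x ∧ q t ≤ (j : ℕ) ∧ (j : ℕ) < q t + x

/-- Key interval-counting lemma: if `pt ≤ r*s+u < pt + (s*(b-1)+1)` with `u < s`,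
then the block index `r` lies in `[pt/s, pt/s + b)`. -/
lemma burst_block_bound (s b pt r u : ℕ) (hs : 0 < s) (hb : 0 < b) (hu : u < s)
    (h1 : pt ≤ r * s + u) (h2 : r * s + u < pt + (s * (b - 1) + 1)) :
    pt / s ≤ r ∧ r - pt / s < b := by
  constructor
  · by_contra h
    push_neg at h
    have h3 : (r + 1) * s ≤ pt / s * s := Nat.mul_le_mul_right s h
    have h4 : pt / s * s ≤ pt := Nat.div_mul_le_self _ _
    have hA : (r + 1) * s = r * s + s := by ring
    linarith
  · have h5 : r * s ≤ pt + s * (b - 1) := by linarith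
    have h6 : r ≤ (pt + s * (b - 1)) / s := (Nat.le_div_iff_mul_le hs).mpr h5
    have h7 : (pt + s * (b - 1)) / s = pt / s + (b - 1) := Nat.add_mul_div_left _ _ hs
    rw [h7] at h6
    calc r - pt / s ≤ pt / s + (b - 1) - pt / s := Nat.sub_le_sub_right h6 _
      _ = b - 1 := Nat.add_sub_cancel_left _ _
      _ < b := Nat.sub_lt hb one_pos

/-- The two-dimensional expansion (via `φ : E ≃ Mat_{s×s}(F)`, `m = s²`)
of a code `C ⊆ E^n` of minimum distance at least `n - k + 1` corrects any `ℓ`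
square bursts of side at most `x = s(⌊√⌊(n-k)/(2ℓ)⌋⌋ - 1) + 1` each. -/
theorem matrix_expansion_corrects_multiple_square_bursts
    {F E : Type*} [Field F] [Fintype F] [DecidableEq F]
    [Field E] [Algebra F E] [DecidableEq E]
    (m s n n₁ n₂ k ℓ : ℕ) (hms : m = s ^ 2) (hm : Module.finrank F E = m)
    (hn₁ : 0 < n₁) (hn₂ : 0 < n₂) (hn : n₁ * n₂ = n)
    (φ : E ≃ₗ[F] Matrix (Fin s) (Fin s) F)
    (Φ₂ : (Fin n → E) → Matrix (Fin (n₁ * s)) (Fin (n₂ * s)) F)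
    (hΦ : ∀ (x : Fin n → E) (r : Fin n₁) (c : Fin n₂) (u v : Fin s),
      Φ₂ x (finIdx r u) (finIdx c v) = φ (x (Fin.cast hn (finIdx r c))) u v)
    (hk : 0 < k) (hkn : k < n) (hℓ : 1 ≤ ℓ)
    (hsq : 1 ≤ Nat.sqrt ((n - k) / (2 * ℓ)))
    (C : Set (Fin n → E))
    (hC : ∀ c ∈ C, ∀ c' ∈ C, c ≠ c' → n - k + 1 ≤ hammingDist c c') :
    ∀ c ∈ C, ∀ c' ∈ C, ∀ e e' : Matrix (Fin (n₁ * s)) (Fin (n₂ * s)) F,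
      IsSquareBurstUnion ℓ (s * (Nat.sqrt ((n - k) / (2 * ℓ)) - 1) + 1) e →
      IsSquareBurstUnion ℓ (s * (Nat.sqrt ((n - k) / (2 * ℓ)) - 1) + 1) e' →
      Φ₂ c + e = Φ₂ c' + e' → c = c' := by
  classical
  intro c hc c' hc' e e' hE hE' heq
  by_contra hne
  -- s is positive
  have hs : 0 < s := by
    rcases Nat.eq_zero_or_pos s with h | h
    · exfalso
      subst h
      have h1 : φ (1 : E) = φ (0 : E) := by
        ext i j
        exact absurd i.2 (by omega)
      exact one_ne_zero (φ.injective h1)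
    · exact h
  obtain ⟨p, q, hp⟩ := hE
  obtain ⟨p', q', hp'⟩ := hE'
  set b := Nat.sqrt ((n - k) / (2 * ℓ)) with hbdef
  have hbpos : 0 < b := hsq
  -- for every coordinate where c and c' differ, we can identify the responsible burst
  have main : ∀ i : Fin n, c i ≠ c' i → ∃ t : Bool × Fin ℓ × Fin b × Fin b,
      i.1 / n₂ = (if t.1 then p t.2.1 else p' t.2.1) / s + t.2.2.1.1 ∧
      i.1 % n₂ = (if t.1 then q t.2.1 else q' t.2.1) / s + t.2.2.2.1 := by
    intro i hi
    have hr : i.1 / n₂ < n₁ := by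
      apply (Nat.div_lt_iff_lt_mul hn₂).mpr
      rw [hn]
      exact i.2
    set r : Fin n₁ := ⟨i.1 / n₂, hr⟩ with hrdef
    set cl : Fin n₂ := ⟨i.1 % n₂, Nat.mod_lt _ hn₂⟩ with hcldef
    have hieq : i = Fin.cast hn (finIdx r cl) := by
      apply Fin.ext
      show i.1 = i.1 / n₂ * n₂ + i.1 % n₂
      exact (Nat.div_add_mod' i.1 n₂).symm
    have hφ : φ (c i) ≠ φ (c' i) := fun h => hi (φ.injective h)
    have hex : ∃ u v : Fin s, φ (c i) u v ≠ φ (c' i) u v := by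
      by_contra h
      push_neg at h
      exact hφ (by ext u v; exact h u v)
    obtain ⟨u, v, huv⟩ := hex
    have heq1 : Φ₂ c (finIdx r u) (finIdx cl v) + e (finIdx r u) (finIdx cl v)
        = Φ₂ c' (finIdx r u) (finIdx cl v) + e' (finIdx r u) (finIdx cl v) := by
      have h := congrFun (congrFun heq (finIdx r u)) (finIdx cl v)
      simpa [Matrix.add_apply] using h
    rw [hΦ c r cl u v, hΦ c' r cl u v, ← hieq] at heq1
    have hru : ((finIdx r u : Fin (n₁ * s)) : ℕ) = r.1 * s + u.1 := rfl
    have hcv : ((finIdx cl v : Fin (n₂ * s)) : ℕ) = cl.1 * s + v.1 := rfl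
    by_cases he : e (finIdx r u) (finIdx cl v) = 0
    · have he' : e' (finIdx r u) (finIdx cl v) ≠ 0 := by
        intro h0
        rw [he, h0, add_zero, add_zero] at heq1
        exact huv heq1
      obtain ⟨t, ht1, ht2, ht3, ht4⟩ := hp' _ _ he'
      rw [hru] at ht1 ht2
      rw [hcv] at ht3 ht4
      obtain ⟨ha1, ha2⟩ := burst_block_bound s b (p' t) r.1 u.1 hs hbpos u.2 ht1 ht2
      obtain ⟨hb1, hb2⟩ := burst_block_bound s b (q' t) cl.1 v.1 hs hbpos v.2 ht3 ht4
      refine ⟨⟨false, t, ⟨r.1 - p' t / s, ha2⟩, ⟨cl.1 - q' t / s, hb2⟩⟩, ?_, ?_⟩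
      · show i.1 / n₂ = (if (false : Bool) then p t else p' t) / s + (r.1 - p' t / s)
        simp only [Bool.false_eq_true, if_false]
        exact (Nat.add_sub_cancel' ha1).symm
      · show i.1 % n₂ = (if (false : Bool) then q t else q' t) / s + (cl.1 - q' t / s)
        simp only [Bool.false_eq_true, if_false]
        exact (Nat.add_sub_cancel' hb1).symm
    · obtain ⟨t, ht1, ht2, ht3, ht4⟩ := hp _ _ he
      rw [hru] at ht1 ht2
      rw [hcv] at ht3 ht4
      obtain ⟨ha1, ha2⟩ := burst_block_bound s b (p t) r.1 u.1 hs hbpos u.2 ht1 ht2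
      obtain ⟨hb1, hb2⟩ := burst_block_bound s b (q t) cl.1 v.1 hs hbpos v.2 ht3 ht4
      refine ⟨⟨true, t, ⟨r.1 - p t / s, ha2⟩, ⟨cl.1 - q t / s, hb2⟩⟩, ?_, ?_⟩
      · show i.1 / n₂ = (if (true : Bool) then p t else p' t) / s + (r.1 - p t / s)
        simp only [if_true]
        exact (Nat.add_sub_cancel' ha1).symm
      · show i.1 % n₂ = (if (true : Bool) then q t else q' t) / s + (cl.1 - q t / s)
        simp only [if_true]
        exact (Nat.add_sub_cancel' hb1).symm
  -- build the injection from differing coordinates into burst data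
  let f : Fin n → Bool × Fin ℓ × Fin b × Fin b := fun i =>
    if h : c i ≠ c' i then (main i h).choose
    else (false, ⟨0, hℓ⟩, ⟨0, hbpos⟩, ⟨0, hbpos⟩)
  have hinj : Set.InjOn f ↑(Finset.univ.filter fun i : Fin n => c i ≠ c' i) := by
    intro i hi j hj hf
    rw [Finset.mem_coe, Finset.mem_filter] at hi hj
    have hi' := hi.2
    have hj' := hj.2
    have hfi : f i = (main i hi').choose := dif_pos hi'
    have hfj : f j = (main j hj').choose := dif_pos hj'
    obtain ⟨hia, hib⟩ := (main i hi').choose_spec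
    obtain ⟨hja, hjb⟩ := (main j hj').choose_spec
    rw [hfi, hfj] at hf
    apply Fin.ext
    have h1 : i.1 / n₂ = j.1 / n₂ := by rw [hia, hja, hf]
    have h2 : i.1 % n₂ = j.1 % n₂ := by rw [hib, hjb, hf]
    calc i.1 = i.1 / n₂ * n₂ + i.1 % n₂ := (Nat.div_add_mod' i.1 n₂).symm
      _ = j.1 / n₂ * n₂ + j.1 % n₂ := by rw [h1, h2]
      _ = j.1 := Nat.div_add_mod' j.1 n₂
  have hcard : (Finset.univ.filter fun i : Fin n => c i ≠ c' i).card
      ≤ Fintype.card (Bool × Fin ℓ × Fin b × Fin b) := by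
    rw [← Finset.card_univ]
    exact Finset.card_le_card_of_injOn f (fun a _ => Finset.mem_univ _) hinj
  have hc2 : Fintype.card (Bool × Fin ℓ × Fin b × Fin b) = 2 * ℓ * b * b := by
    simp [Fintype.card_prod]
    ring
  have hbb : b * b ≤ (n - k) / (2 * ℓ) := by
    have := Nat.sqrt_le' ((n - k) / (2 * ℓ))
    rw [pow_two] at this
    exact this
  have hfin : 2 * ℓ * b * b ≤ n - k := by
    calc 2 * ℓ * b * b = 2 * ℓ * (b * b) := by ring
      _ ≤ 2 * ℓ * ((n - k) / (2 * ℓ)) := Nat.mul_le_mul_left _ hbb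
      _ ≤ n - k := Nat.mul_div_le _ _
  have hdist : n - k + 1 ≤ hammingDist c c' := hC c hc c' hc' hne
  have hdeq : hammingDist c c' = (Finset.univ.filter fun i : Fin n => c i ≠ c' i).card := rfl
  omega
end

section
/- Let F_q be a finite field, E a field extension of F_q of degree m where m = s² is a perfect square, φ an F_q-linear bijection from E to the s × s matrices over F_q, n₁, n₂ positive integers with n₁n₂ = n, and Φ₂ : E^n → (n₁s × n₂s matrices over F_q) the two-dimensional expansion. Let 0 < k < n, set t = ⌊(n−k)/2⌋ and assume t ≥ 1, and let C ⊆ E^n have minimum Hamming distance at least n−k+1. Then Φ₂(C) corrects any single one-dimensional burst of length at most s(t−1)+1: for all c, c′ ∈ C and all n₁s × n₂s matrices e, e′ over F_q whose supports are each contained either in a single row within s(t−1)+1 contiguous columns or in a single column within s(t−1)+1 contiguous rows, Φ₂(c) + e = Φ₂(c′) + e′ implies c = c′. -/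
/-- A one-dimensional burst of length (at most) `L` in a matrix: the support lies in
a single row within `L` contiguous columns, or in a single column within `L`
contiguous rows. -/
def IsLineBurst {F : Type*} [Zero F] {R C : ℕ} (L : ℕ) (e : Matrix (Fin R) (Fin C) F) : Prop :=
  (∃ r p : ℕ, ∀ i j, e i j ≠ 0 → (i : ℕ) = r ∧ p ≤ (j : ℕ) ∧ (j : ℕ) < p + L) ∨
  (∃ c p : ℕ, ∀ i j, e i j ≠ 0 → (j : ℕ) = c ∧ p ≤ (i : ℕ) ∧ (i : ℕ) < p + L)

/-! Since `φ` is injective, two words differ in a symbol exactly when their expansions differ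
somewhere in the corresponding `s × s` block. A line burst of length `s(t-1)+1` stays in one
row (or column) of blocks and spans at most `t` consecutive blocks, so if
`Φ₂ c + e = Φ₂ c' + e'` then `Φ₂ c - Φ₂ c' = e' - e` is nonzero in at most `2t ≤ n - k` blocks,
and the minimum distance forces `c = c'`. -/

open Finset

lemma finIdx_val_div {n m : ℕ} (i : Fin n) (j : Fin m) : (finIdx i j : ℕ) / m = i := by
  change (i * m + j) / m = i
  rw [add_comm, Nat.add_mul_div_right _ _ j.pos, Nat.div_eq_of_lt j.2, zero_add]

lemma finProdFinEquiv_eq_finIdx {n m : ℕ} (i : Fin n) (j : Fin m) :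
    finProdFinEquiv (i, j) = finIdx i j := by
  ext
  simp [finIdx, finProdFinEquiv, mul_comm, add_comm]

lemma Nat.div_mem_Icc_of_le_of_lt {s p i b : ℕ} (hs : 0 < s) (hpi : p ≤ i)
    (hi : i < p + (s * b + 1)) : i / s ∈ Icc (p / s) (p / s + b) := by
  refine mem_Icc.2 ⟨Nat.div_le_div_right hpi, ?_⟩
  rw [← Nat.add_mul_div_left _ _ hs]
  exact Nat.div_le_div_right (by omega)

section BlockSupport

variable {α : Type*} {n₁ n₂ s : ℕ}

open Classical in
noncomputable def blockSupport [Zero α] (e : Matrix (Fin (n₁ * s)) (Fin (n₂ * s)) α) :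
    Finset (Fin n₁ × Fin n₂) :=
  {rc | ∃ u v, e (finIdx rc.1 u) (finIdx rc.2 v) ≠ 0}

lemma mem_blockSupport [Zero α] {e : Matrix (Fin (n₁ * s)) (Fin (n₂ * s)) α}
    {rc : Fin n₁ × Fin n₂} :
    rc ∈ blockSupport e ↔ ∃ u v, e (finIdx rc.1 u) (finIdx rc.2 v) ≠ 0 := by
  simp [blockSupport]

lemma blockSupport_sub_subset [AddGroup α] (e e' : Matrix (Fin (n₁ * s)) (Fin (n₂ * s)) α) :
    blockSupport (e - e') ⊆ blockSupport e ∪ blockSupport e' := by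
  intro rc hrc
  obtain ⟨u, v, hne⟩ := mem_blockSupport.1 hrc
  rw [mem_union, mem_blockSupport, mem_blockSupport]
  by_contra! h
  exact hne (by simp [h.1 u v, h.2 u v])

theorem IsLineBurst.card_blockSupport_le [Zero α] {b : ℕ}
    {e : Matrix (Fin (n₁ * s)) (Fin (n₂ * s)) α} (he : IsLineBurst (s * b + 1) e) :
    #(blockSupport e) ≤ b + 1 := by
  obtain ⟨T, hT, hmaps⟩ : ∃ T : Finset (ℕ × ℕ), #T = b + 1 ∧
      ∀ rc ∈ blockSupport e, ((rc.1 : ℕ), (rc.2 : ℕ)) ∈ T := by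
    rcases he with ⟨r, p, h⟩ | ⟨c, p, h⟩
    · refine ⟨{r / s} ×ˢ Icc (p / s) (p / s + b), by simp [add_assoc], fun ⟨i, j⟩ hij => ?_⟩
      obtain ⟨u, v, hne⟩ := mem_blockSupport.1 hij
      obtain ⟨hr, hp, hpL⟩ := h _ _ hne
      rw [mem_product, mem_singleton, ← finIdx_val_div i u, ← finIdx_val_div j v, hr]
      exact ⟨rfl, Nat.div_mem_Icc_of_le_of_lt u.pos hp hpL⟩
    · refine ⟨Icc (p / s) (p / s + b) ×ˢ {c / s}, by simp [add_assoc], fun ⟨i, j⟩ hij => ?_⟩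
      obtain ⟨u, v, hne⟩ := mem_blockSupport.1 hij
      obtain ⟨hc, hp, hpL⟩ := h _ _ hne
      rw [mem_product, mem_singleton, ← finIdx_val_div i u, ← finIdx_val_div j v, hc]
      exact ⟨Nat.div_mem_Icc_of_le_of_lt u.pos hp hpL, rfl⟩
  exact hT ▸ card_le_card_of_injOn _ hmaps (Fin.val_injective.prodMap Fin.val_injective).injOn

theorem hammingDist_eq_card_blockSupport_sub {β : Type*} [AddGroup α] [DecidableEq β] {n : ℕ}
    (hn : n₁ * n₂ = n) {φ : β → Matrix (Fin s) (Fin s) α} (hφ : Function.Injective φ)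
    {Φ : (Fin n → β) → Matrix (Fin (n₁ * s)) (Fin (n₂ * s)) α}
    (hΦ : ∀ (x : Fin n → β) (r : Fin n₁) (c : Fin n₂) (u v : Fin s),
      Φ x (finIdx r u) (finIdx c v) = φ (x (Fin.cast hn (finIdx r c))) u v)
    (x y : Fin n → β) :
    hammingDist x y = #(blockSupport (Φ x - Φ y)) := by
  refine (card_equiv (finProdFinEquiv.trans (finCongr hn)) fun ⟨r, c⟩ => ?_).symm
  rw [Equiv.trans_apply, finProdFinEquiv_eq_finIdx]
  simp only [mem_blockSupport, Matrix.sub_apply, hΦ, sub_ne_zero, ← hφ.ne_iff, Ne,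
    ← Matrix.ext_iff, not_forall, mem_filter_univ, finCongr_apply]

end BlockSupport

theorem matrix_expansion_corrects_single_line_burst_general
    {F E : Type*} [Field F]
    [Field E] [Algebra F E] [DecidableEq E]
    (s n n₁ n₂ k t : ℕ)
    (hn : n₁ * n₂ = n)
    (φ : E ≃ₗ[F] Matrix (Fin s) (Fin s) F)
    (Φ₂ : (Fin n → E) → Matrix (Fin (n₁ * s)) (Fin (n₂ * s)) F)
    (hΦ : ∀ (x : Fin n → E) (r : Fin n₁) (c : Fin n₂) (u v : Fin s),
      Φ₂ x (finIdx r u) (finIdx c v) = φ (x (Fin.cast hn (finIdx r c))) u v)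
    (ht : t = (n - k) / 2) (ht1 : 1 ≤ t)
    (C : Set (Fin n → E))
    (hC : ∀ c ∈ C, ∀ c' ∈ C, c ≠ c' → n - k + 1 ≤ hammingDist c c') :
    ∀ c ∈ C, ∀ c' ∈ C, ∀ e e' : Matrix (Fin (n₁ * s)) (Fin (n₂ * s)) F,
      IsLineBurst (s * (t - 1) + 1) e → IsLineBurst (s * (t - 1) + 1) e' →
      Φ₂ c + e = Φ₂ c' + e' → c = c' := by
  intro c hc c' hc' e e' he he' heq
  by_contra hne
  obtain ⟨b, rfl⟩ := Nat.exists_eq_add_of_le' ht1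
  rw [Nat.add_sub_cancel] at he he'
  have hdiff : Φ₂ c - Φ₂ c' = e' - e := by
    rw [sub_eq_sub_iff_add_eq_add, heq, add_comm]
  have hdist : hammingDist c c' ≤ 2 * (b + 1) := calc
    hammingDist c c' = #(blockSupport (Φ₂ c - Φ₂ c')) :=
      hammingDist_eq_card_blockSupport_sub hn φ.injective hΦ c c'
    _ ≤ #(blockSupport e' ∪ blockSupport e) :=
      card_le_card (hdiff ▸ blockSupport_sub_subset e' e)
    _ ≤ #(blockSupport e') + #(blockSupport e) := card_union_le _ _
    _ ≤ 2 * (b + 1) := by linarith [he.card_blockSupport_le, he'.card_blockSupport_le]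
  have := hC c hc c' hc' hne
  omega

/-- The two-dimensional expansion (via `φ : E ≃ Mat_{s×s}(F)`, `m = s²`)
of a code `C ⊆ E^n` of minimum distance at least `n - k + 1` corrects any single
one-dimensional burst of length at most `s(t-1)+1`, where `t = ⌊(n-k)/2⌋ ≥ 1`. -/
theorem matrix_expansion_corrects_single_line_burst
    {F E : Type*} [Field F] [Fintype F] [DecidableEq F]
    [Field E] [Algebra F E] [DecidableEq E]
    (m s n n₁ n₂ k t : ℕ) (hms : m = s ^ 2) (hm : Module.finrank F E = m)
    (hn₁ : 0 < n₁) (hn₂ : 0 < n₂) (hn : n₁ * n₂ = n)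
    (φ : E ≃ₗ[F] Matrix (Fin s) (Fin s) F)
    (Φ₂ : (Fin n → E) → Matrix (Fin (n₁ * s)) (Fin (n₂ * s)) F)
    (hΦ : ∀ (x : Fin n → E) (r : Fin n₁) (c : Fin n₂) (u v : Fin s),
      Φ₂ x (finIdx r u) (finIdx c v) = φ (x (Fin.cast hn (finIdx r c))) u v)
    (hk : 0 < k) (hkn : k < n) (ht : t = (n - k) / 2) (ht1 : 1 ≤ t)
    (C : Set (Fin n → E))
    (hC : ∀ c ∈ C, ∀ c' ∈ C, c ≠ c' → n - k + 1 ≤ hammingDist c c') :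
    ∀ c ∈ C, ∀ c' ∈ C, ∀ e e' : Matrix (Fin (n₁ * s)) (Fin (n₂ * s)) F,
      IsLineBurst (s * (t - 1) + 1) e → IsLineBurst (s * (t - 1) + 1) e' →
      Φ₂ c + e = Φ₂ c' + e' → c = c' :=
  matrix_expansion_corrects_single_line_burst_general s n n₁ n₂ k t hn φ Φ₂ hΦ ht ht1 C hC
end

section
/- Let F_q be a finite field, E a field extension of F_q of degree m where m = s² is a perfect square, φ an F_q-linear bijection from E to the s × s matrices over F_q, n₁, n₂ positive integers with n₁n₂ = n, and Φ₂ : E^n → (n₁s × n₂s matrices over F_q) the two-dimensional expansion. Let 0 < k < n and ℓ ≥ 1, set t = ⌊(n−k)/(2ℓ)⌋ and assume t ≥ 1, and let C ⊆ E^n have minimum Hamming distance at least n−k+1. Then Φ₂(C) corrects any ℓ one-dimensional bursts of length at most s(t−1)+1 each: for all c, c′ ∈ C and all n₁s × n₂s matrices e, e′ over F_q whose supports are each covered by a union of ℓ sets, each of which lies in a single row within s(t−1)+1 contiguous columns or in a single column within s(t−1)+1 contiguous rows, Φ₂(c) + e = Φ₂(c′) + e′ implies c = c′. -/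
private lemma div_of_block {s a u : ℕ} (hs : 0 < s) (hu : u < s) :
    (a * s + u) / s = a := by
  rw [mul_comm, Nat.mul_add_div hs, Nat.div_eq_of_lt hu, add_zero]

private lemma burst_block_bounds {s a u P t' : ℕ} (hs : 0 < s) (hu : u < s)
    (h1 : P ≤ a * s + u) (h2 : a * s + u < P + (s * t' + 1)) :
    P / s ≤ a ∧ a ≤ P / s + t' := by
  have hdiv : (a * s + u) / s = a := div_of_block hs hu
  constructor
  · calc P / s ≤ (a * s + u) / s := Nat.div_le_div_right h1
      _ = a := hdiv
  · have h2' : a * s + u ≤ P + s * t' := by omega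
    calc a = (a * s + u) / s := hdiv.symm
      _ ≤ (P + s * t') / s := Nat.div_le_div_right h2'
      _ = P / s + t' := by rw [mul_comm s t', Nat.add_mul_div_right _ _ hs]

private lemma fiber_card_le {n n₂ s t' : ℕ} (hs : 0 < s) (hn₂ : 0 < n₂)
    (S : Finset (Fin n)) (d : Bool) (R P : ℕ) (gu gv : Fin n → ℕ)
    (hu : ∀ x ∈ S, gu x < s) (hv : ∀ x ∈ S, gv x < s)
    (hcov : ∀ x ∈ S, cond d
      ((x : ℕ) / n₂ * s + gu x = R ∧ P ≤ (x : ℕ) % n₂ * s + gv x ∧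
        (x : ℕ) % n₂ * s + gv x < P + (s * t' + 1))
      ((x : ℕ) % n₂ * s + gv x = R ∧ P ≤ (x : ℕ) / n₂ * s + gu x ∧
        (x : ℕ) / n₂ * s + gu x < P + (s * t' + 1))) :
    S.card ≤ t' + 1 := by
  cases d with
  | true =>
      have hcard : (Finset.Icc (P / s) (P / s + t')).card = t' + 1 := by
        rw [Nat.card_Icc]; omega
      rw [← hcard]
      refine Finset.card_le_card_of_injOn (fun x => (x : ℕ) % n₂) ?_ ?_
      · intro x hx
        have h := hcov x hx
        simp only [cond_true] at h
        obtain ⟨h1, h2, h3⟩ := h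
        have := burst_block_bounds hs (hv x hx) h2 h3
        simp [Finset.mem_Icc]; omega
      · intro x hx y hy hxy
        have h := hcov x hx
        have h' := hcov y hy
        simp only [cond_true] at h h'
        have hx1 : (x : ℕ) / n₂ = R / s := by
          rw [← h.1, div_of_block hs (hu x hx)]
        have hy1 : (y : ℕ) / n₂ = R / s := by
          rw [← h'.1, div_of_block hs (hu y hy)]
        have hxy' : (x : ℕ) % n₂ = (y : ℕ) % n₂ := hxy
        exact Fin.ext (by
          rw [← Nat.div_add_mod (x : ℕ) n₂, ← Nat.div_add_mod (y : ℕ) n₂, hx1, hy1, hxy'])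
  | false =>
      have hcard : (Finset.Icc (P / s) (P / s + t')).card = t' + 1 := by
        rw [Nat.card_Icc]; omega
      rw [← hcard]
      refine Finset.card_le_card_of_injOn (fun x => (x : ℕ) / n₂) ?_ ?_
      · intro x hx
        have h := hcov x hx
        simp only [cond_false] at h
        obtain ⟨h1, h2, h3⟩ := h
        have := burst_block_bounds hs (hu x hx) h2 h3
        simp [Finset.mem_Icc]; omega
      · intro x hx y hy hxy
        have h := hcov x hx
        have h' := hcov y hy
        simp only [cond_false] at h h'
        have hx1 : (x : ℕ) % n₂ = R / s := by
          rw [← h.1, div_of_block hs (hv x hx)]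
        have hy1 : (y : ℕ) % n₂ = R / s := by
          rw [← h'.1, div_of_block hs (hv y hy)]
        have hxy' : (x : ℕ) / n₂ = (y : ℕ) / n₂ := hxy
        exact Fin.ext (by
          rw [← Nat.div_add_mod (x : ℕ) n₂, ← Nat.div_add_mod (y : ℕ) n₂, hx1, hy1, hxy'])
/-- `ℓ` one-dimensional bursts of length (at most) `L` each: the support of the
matrix is covered by a union of `ℓ` sets, each lying in a single row within `L`
contiguous columns (when `dir t = true`) or in a single column within `L`
contiguous rows (when `dir t = false`). -/
def IsLineBurstUnion {F : Type*} [Zero F] {R C : ℕ} (ℓ L : ℕ)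
    (e : Matrix (Fin R) (Fin C) F) : Prop :=
  ∃ (dir : Fin ℓ → Bool) (r p : Fin ℓ → ℕ), ∀ i j, e i j ≠ 0 → ∃ t : Fin ℓ,
    cond (dir t)
      ((i : ℕ) = r t ∧ p t ≤ (j : ℕ) ∧ (j : ℕ) < p t + L)
      ((j : ℕ) = r t ∧ p t ≤ (i : ℕ) ∧ (i : ℕ) < p t + L)

/-- The two-dimensional expansion (via `φ : E ≃ Mat_{s×s}(F)`, `m = s²`)
of a code `C ⊆ E^n` of minimum distance at least `n - k + 1` corrects any `ℓ`
one-dimensional bursts of length at most `s(t-1)+1` each, where `t = ⌊(n-k)/(2ℓ)⌋ ≥ 1`. -/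
theorem matrix_expansion_corrects_multiple_line_bursts
    {F E : Type*} [Field F] [Fintype F] [DecidableEq F]
    [Field E] [Algebra F E] [DecidableEq E]
    (m s n n₁ n₂ k ℓ t : ℕ) (hms : m = s ^ 2) (hm : Module.finrank F E = m)
    (hn₁ : 0 < n₁) (hn₂ : 0 < n₂) (hn : n₁ * n₂ = n)
    (φ : E ≃ₗ[F] Matrix (Fin s) (Fin s) F)
    (Φ₂ : (Fin n → E) → Matrix (Fin (n₁ * s)) (Fin (n₂ * s)) F)
    (hΦ : ∀ (x : Fin n → E) (r : Fin n₁) (c : Fin n₂) (u v : Fin s),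
      Φ₂ x (finIdx r u) (finIdx c v) = φ (x (Fin.cast hn (finIdx r c))) u v)
    (hk : 0 < k) (hkn : k < n) (hℓ : 1 ≤ ℓ) (ht : t = (n - k) / (2 * ℓ)) (ht1 : 1 ≤ t)
    (C : Set (Fin n → E))
    (hC : ∀ c ∈ C, ∀ c' ∈ C, c ≠ c' → n - k + 1 ≤ hammingDist c c') :
    ∀ c ∈ C, ∀ c' ∈ C, ∀ e e' : Matrix (Fin (n₁ * s)) (Fin (n₂ * s)) F,
      IsLineBurstUnion ℓ (s * (t - 1) + 1) e → IsLineBurstUnion ℓ (s * (t - 1) + 1) e' →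
      Φ₂ c + e = Φ₂ c' + e' → c = c' := by
  intro c hc c' hc' e e' hbe hbe' heq
  by_contra hne
  have hd := hC c hc c' hc' hne
  have hs : 0 < s := by
    rcases Nat.eq_zero_or_pos s with h | h
    · subst h
      have h0 : φ (1 : E) = φ 0 := funext fun i => i.elim0
      exact absurd (φ.injective h0) one_ne_zero
    · exact h
  obtain ⟨dir1, r1, p1, hb1⟩ := hbe
  obtain ⟨dir2, r2, p2, hb2⟩ := hbe'
  set D := Finset.univ.filter (fun x : Fin n => c x ≠ c' x) with hDdef
  have hcard : hammingDist c c' = D.card := rfl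
  -- combined burst data indexed by Bool × Fin ℓ
  set dir : Bool × Fin ℓ → Bool := fun b => cond b.1 (dir1 b.2) (dir2 b.2) with hdir
  set rr : Bool × Fin ℓ → ℕ := fun b => cond b.1 (r1 b.2) (r2 b.2) with hrr
  set pp : Bool × Fin ℓ → ℕ := fun b => cond b.1 (p1 b.2) (p2 b.2) with hpp
  have key : ∀ x ∈ D, ∃ (b : Bool × Fin ℓ) (u v : Fin s),
      cond (dir b)
        ((x : ℕ) / n₂ * s + (u : ℕ) = rr b ∧ pp b ≤ (x : ℕ) % n₂ * s + (v : ℕ) ∧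
          (x : ℕ) % n₂ * s + (v : ℕ) < pp b + (s * (t - 1) + 1))
        ((x : ℕ) % n₂ * s + (v : ℕ) = rr b ∧ pp b ≤ (x : ℕ) / n₂ * s + (u : ℕ) ∧
          (x : ℕ) / n₂ * s + (u : ℕ) < pp b + (s * (t - 1) + 1)) := by
    intro x hx
    have hxne : c x ≠ c' x := (Finset.mem_filter.mp hx).2
    have hφne : φ (c x) ≠ φ (c' x) := fun h => hxne (φ.injective h)
    obtain ⟨u, v, huv⟩ : ∃ u v : Fin s, φ (c x) u v ≠ φ (c' x) u v := by
      by_contra hcon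
      push_neg at hcon
      exact hφne (by ext u v; exact hcon u v)
    have hxdiv : (x : ℕ) / n₂ < n₁ := by
      have : (x : ℕ) < n₁ * n₂ := hn ▸ x.2
      exact Nat.div_lt_of_lt_mul (by rw [mul_comm]; exact this)
    set rx : Fin n₁ := ⟨(x : ℕ) / n₂, hxdiv⟩ with hrx
    set cx : Fin n₂ := ⟨(x : ℕ) % n₂, Nat.mod_lt _ hn₂⟩ with hcx
    have hxeq : Fin.cast hn (finIdx rx cx) = x := by
      apply Fin.ext
      show (x : ℕ) / n₂ * n₂ + (x : ℕ) % n₂ = (x : ℕ)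
      rw [mul_comm]
      exact Nat.div_add_mod _ _
    have h1 : Φ₂ c (finIdx rx u) (finIdx cx v) = φ (c x) u v := by
      rw [hΦ, hxeq]
    have h2 : Φ₂ c' (finIdx rx u) (finIdx cx v) = φ (c' x) u v := by
      rw [hΦ, hxeq]
    have hsum := congrFun (congrFun heq (finIdx rx u)) (finIdx cx v)
    simp only [Matrix.add_apply] at hsum
    have hene : e (finIdx rx u) (finIdx cx v) ≠ 0 ∨ e' (finIdx rx u) (finIdx cx v) ≠ 0 := by
      by_contra hcon
      push_neg at hcon
      rw [hcon.1, hcon.2, add_zero, add_zero, h1, h2] at hsum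
      exact huv hsum
    have hidx1 : ((finIdx rx u : Fin (n₁ * s)) : ℕ) = (x : ℕ) / n₂ * s + (u : ℕ) := rfl
    have hidx2 : ((finIdx cx v : Fin (n₂ * s)) : ℕ) = (x : ℕ) % n₂ * s + (v : ℕ) := rfl
    rcases hene with he | he
    · obtain ⟨τ, hτ⟩ := hb1 _ _ he
      exact ⟨(true, τ), u, v, by simpa [hdir, hrr, hpp, hidx1, hidx2] using hτ⟩
    · obtain ⟨τ, hτ⟩ := hb2 _ _ he
      exact ⟨(false, τ), u, v, by simpa [hdir, hrr, hpp, hidx1, hidx2] using hτ⟩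
  have : Nonempty (Fin ℓ) := ⟨⟨0, hℓ⟩⟩
  have : Nonempty (Fin s) := ⟨⟨0, hs⟩⟩
  choose! gb gu gv hbur using key
  have hmap : ∀ x ∈ D, gb x ∈ (Finset.univ : Finset (Bool × Fin ℓ)) := fun x _ => Finset.mem_univ _
  have hsum := Finset.card_eq_sum_card_fiberwise hmap
  have hfib : ∀ b ∈ (Finset.univ : Finset (Bool × Fin ℓ)),
      (D.filter fun x => gb x = b).card ≤ t := by
    intro b _
    have := fiber_card_le (n := n) (n₂ := n₂) hs hn₂ (D.filter fun x => gb x = b)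
      (dir b) (rr b) (pp b) (fun x => (gu x : ℕ)) (fun x => (gv x : ℕ))
      (fun x _ => (gu x).2) (fun x _ => (gv x).2)
      (fun x hx => by
        have hxD := (Finset.mem_filter.mp hx).1
        have hxb := (Finset.mem_filter.mp hx).2
        have := hbur x hxD
        rw [hxb] at this
        exact this)
    omega
  have hDle : D.card ≤ 2 * ℓ * t := by
    rw [hsum]
    calc ∑ b ∈ (Finset.univ : Finset (Bool × Fin ℓ)), (D.filter fun x => gb x = b).card
        ≤ ∑ _b ∈ (Finset.univ : Finset (Bool × Fin ℓ)), t := Finset.sum_le_sum hfib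
      _ = 2 * ℓ * t := by
          rw [Finset.sum_const, smul_eq_mul]
          simp [Fintype.card_prod]
  have htle : 2 * ℓ * t ≤ n - k := by
    rw [ht, mul_comm]
    exact Nat.div_mul_le_self _ _
  rw [hcard] at hd
  omega
end

section
/- Let N, n, b, a be positive integers with b dividing N and a dividing n. Place the index pairs (i,j) with 1 ≤ i ≤ N and 1 ≤ j ≤ n into a (Na/b) × (nb/a) array by assigning (i,j) to row (⌈ja/n⌉ − 1)·(N/b) + ⌈i/b⌉ and column ((j−1) mod (n/a))·b + ((i−1) mod b) + 1. Then this assignment is a bijection onto the array cells, and for every fixed i, any contiguous axis-aligned rectangle of the array with at most N/b rows and at most b columns contains at most one cell assigned a pair of the form (i, j). -/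
/-- Construction IV, 1-based row index of the cell of `(i, j)`:
`(⌈ja/n⌉ − 1)·(N/b) + ⌈i/b⌉`, where `⌈x/y⌉` is computed as `(x + y - 1) / y`. -/
def rowIdxIV (N n b a i j : ℕ) : ℕ :=
  ((j * a + n - 1) / n - 1) * (N / b) + (i + b - 1) / b

/-- Construction IV, 1-based column index of the cell of `(i, j)`:
`((j−1) mod (n/a))·b + ((i−1) mod b) + 1`. -/
def colIdxIV (n b a i j : ℕ) : ℕ :=
  ((j - 1) % (n / a)) * b + ((i - 1) % b) + 1



-- ceil (i/b) = (i-1)/b + 1 for i ≥ 1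
lemma ceilA (b k : ℕ) (hb : 0 < b) : (k + 1 + b - 1) / b = k / b + 1 := by
  have h : k + 1 + b - 1 = k + b := by omega
  rw [h, Nat.add_div_right _ hb]

lemma ceilB (a m t : ℕ) (ha : 0 < a) (hm : 0 < m) :
    ((t + 1) * a + a * m - 1) / (a * m) = t / m + 1 := by
  obtain ⟨q, r, hrm, rfl⟩ : ∃ q r, r < m ∧ t = m * q + r :=
    ⟨t / m, t % m, Nat.mod_lt t hm, (Nat.div_add_mod t m).symm⟩
  rw [Nat.mul_add_div hm, Nat.div_eq_of_lt hrm, Nat.add_zero]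
  have h2 : (m * q + r + 1) * a + a * m = a * m * (q + 1) + (a * r + a) := by ring
  have hlt : a * r + a - 1 < a * m := by
    have h5 : a * (r + 1) ≤ a * m := Nat.mul_le_mul_left a hrm
    have h3 : a * (r + 1) = a * r + a := by ring
    omega
  have h4 : (m * q + r + 1) * a + a * m - 1 = a * m * (q + 1) + (a * r + a - 1) := by
    have hX : 1 ≤ a * r + a := Nat.le_trans ha (Nat.le_add_left a _)
    omega
  rw [h4, Nat.mul_add_div (by positivity), Nat.div_eq_of_lt hlt]

lemma splitEq {x y u v K : ℕ} (hu : u < K) (hv : v < K)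
    (h : x * K + u = y * K + v) : x = y ∧ u = v := by
  have hK : 0 < K := by omega
  have h1 : (x * K + u) / K = x := by
    rw [mul_comm, Nat.mul_add_div hK, Nat.div_eq_of_lt hu, Nat.add_zero]
  have h2 : (y * K + v) / K = y := by
    rw [mul_comm, Nat.mul_add_div hK, Nat.div_eq_of_lt hv, Nat.add_zero]
  have h3 : (x * K + u) % K = u := by
    rw [mul_comm x K, Nat.mul_add_mod, Nat.mod_eq_of_lt hu]
  have h4 : (y * K + v) % K = v := by
    rw [mul_comm y K, Nat.mul_add_mod, Nat.mod_eq_of_lt hv]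
  constructor
  · rw [← h1, ← h2, h]
  · rw [← h3, ← h4, h]

lemma eqOfClose (x y K : ℕ) (h1 : x * K < y * K + K) (h2 : y * K < x * K + K) : x = y := by
  have a1 : x < y + 1 := by
    have : x * K < (y + 1) * K := by rw [add_mul, one_mul]; exact h1
    exact lt_of_mul_lt_mul_right this (Nat.zero_le K)
  have a2 : y < x + 1 := by
    have : y * K < (x + 1) * K := by rw [add_mul, one_mul]; exact h2
    exact lt_of_mul_lt_mul_right this (Nat.zero_le K)
  omega

lemma rowNF (N n b a i j M m : ℕ) (hb : 0 < b) (ha : 0 < a) (hm : 0 < m)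
    (hN : N = b * M) (hn : n = a * m) (hi : 1 ≤ i) (hj : 1 ≤ j) :
    rowIdxIV N n b a i j = ((j - 1) / m) * M + (i - 1) / b + 1 := by
  obtain ⟨t, rfl⟩ : ∃ t, j = t + 1 := ⟨j - 1, by omega⟩
  obtain ⟨s, rfl⟩ : ∃ s, i = s + 1 := ⟨i - 1, by omega⟩
  unfold rowIdxIV
  rw [hn, hN, Nat.mul_div_cancel_left _ hb, ceilB a m t ha hm, ceilA b s hb]
  simp [Nat.add_assoc]

lemma colNF (n b a i j m : ℕ) (ha : 0 < a) (hn : n = a * m) :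
    colIdxIV n b a i j = ((j - 1) % m) * b + ((i - 1) % b) + 1 := by
  unfold colIdxIV
  rw [hn, Nat.mul_div_cancel_left _ ha]

lemma window {X Y u K r h : ℕ} (hh : h ≤ K) (h1 : r ≤ X + u + 1) (h2 : X + u + 1 < r + h)
    (h3 : r ≤ Y + u + 1) (h4 : Y + u + 1 < r + h) : X < Y + K ∧ Y < X + K := by omega

lemma oneLe (x y : ℕ) : 1 ≤ x + y + 1 := by omega

lemma upBound (x u K A : ℕ) (hx : x < A) (hu : u < K) : x * K + u + 1 ≤ A * K := by
  calc x * K + u + 1 ≤ x * K + K := by omega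
    _ = (x + 1) * K := by ring
    _ ≤ A * K := Nat.mul_le_mul_right K hx

/-- The Construction-IV placement rule is a bijection from the index
pairs `(i, j)`, `1 ≤ i ≤ N`, `1 ≤ j ≤ n`, onto the cells of the `(Na/b) × (nb/a)`
array, and for every fixed `i` any contiguous axis-aligned rectangle with at most
`N/b` rows and at most `b` columns contains at most one cell assigned a pair of
the form `(i, j)`. -/
theorem constructionIV_placement (N n b a : ℕ)
    (hN : 0 < N) (hn : 0 < n) (hb : 0 < b) (ha : 0 < a) (hbN : b ∣ N) (han : a ∣ n) :
    Set.BijOn (fun p : ℕ × ℕ => (rowIdxIV N n b a p.1 p.2, colIdxIV n b a p.1 p.2))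
      (Set.Icc 1 N ×ˢ Set.Icc 1 n)
      (Set.Icc 1 (N * a / b) ×ˢ Set.Icc 1 (n * b / a)) ∧
    ∀ i ∈ Set.Icc 1 N, ∀ r₀ c₀ h w : ℕ, h ≤ N / b → w ≤ b →
      ∀ j ∈ Set.Icc 1 n, ∀ j' ∈ Set.Icc 1 n,
        (r₀ ≤ rowIdxIV N n b a i j ∧ rowIdxIV N n b a i j < r₀ + h ∧
          c₀ ≤ colIdxIV n b a i j ∧ colIdxIV n b a i j < c₀ + w) →
        (r₀ ≤ rowIdxIV N n b a i j' ∧ rowIdxIV N n b a i j' < r₀ + h ∧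
          c₀ ≤ colIdxIV n b a i j' ∧ colIdxIV n b a i j' < c₀ + w) →
        j = j' := by
  obtain ⟨M, hNM⟩ := hbN
  obtain ⟨m, hnm⟩ := han
  have hM : 0 < M := Nat.pos_of_ne_zero (fun h => by subst h; rw [Nat.mul_zero] at hNM; omega)
  have hm : 0 < m := Nat.pos_of_ne_zero (fun h => by subst h; rw [Nat.mul_zero] at hnm; omega)
  have hMeq : N / b = M := by rw [hNM, Nat.mul_div_cancel_left _ hb]
  have hRmax : N * a / b = a * M := by
    rw [hNM, mul_assoc, Nat.mul_div_cancel_left _ hb, mul_comm]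
  have hCmax : n * b / a = m * b := by
    rw [hnm, mul_assoc, Nat.mul_div_cancel_left _ ha, mul_comm]
  constructor
  · refine ⟨?_, ?_, ?_⟩
    · -- MapsTo
      rintro ⟨i, j⟩ hp
      simp only [Set.mem_prod, Set.mem_Icc] at hp ⊢
      obtain ⟨⟨hi1, hi2⟩, hj1, hj2⟩ := hp
      rw [rowNF N n b a i j M m hb ha hm hNM hnm hi1 hj1, colNF n b a i j m ha hnm,
        hRmax, hCmax]
      have hjlt : j - 1 < a * m := by rw [← hnm]; omega
      have hilt : i - 1 < b * M := by rw [← hNM]; omega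
      have hjd : (j - 1) / m < a := (Nat.div_lt_iff_lt_mul hm).mpr hjlt
      have hid : (i - 1) / b < M := (Nat.div_lt_iff_lt_mul hb).mpr (by rw [mul_comm]; exact hilt)
      exact ⟨⟨oneLe _ _, upBound _ _ M a hjd hid⟩,
        oneLe _ _, upBound _ _ b m (Nat.mod_lt _ hm) (Nat.mod_lt _ hb)⟩
    · -- InjOn
      rintro ⟨i, j⟩ hp ⟨i', j'⟩ hq heq
      simp only [Set.mem_prod, Set.mem_Icc] at hp hq
      obtain ⟨⟨hi1, hi2⟩, hj1, hj2⟩ := hp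
      obtain ⟨⟨hi1', hi2'⟩, hj1', hj2'⟩ := hq
      simp only [Prod.mk.injEq] at heq ⊢
      obtain ⟨hrow, hcol⟩ := heq
      rw [rowNF N n b a i j M m hb ha hm hNM hnm hi1 hj1,
        rowNF N n b a i' j' M m hb ha hm hNM hnm hi1' hj1'] at hrow
      rw [colNF n b a i j m ha hnm, colNF n b a i' j' m ha hnm] at hcol
      have hrow' : (j - 1) / m * M + (i - 1) / b = (j' - 1) / m * M + (i' - 1) / b :=
        Nat.add_right_cancel hrow
      have hcol' : (j - 1) % m * b + (i - 1) % b = (j' - 1) % m * b + (i' - 1) % b :=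
        Nat.add_right_cancel hcol
      have hid : (i - 1) / b < M := (Nat.div_lt_iff_lt_mul hb).mpr
        (by rw [mul_comm, ← hNM]; omega)
      have hid' : (i' - 1) / b < M := (Nat.div_lt_iff_lt_mul hb).mpr
        (by rw [mul_comm, ← hNM]; omega)
      obtain ⟨hxd, hud⟩ := splitEq hid hid' hrow'
      obtain ⟨hxm, hum⟩ := splitEq (Nat.mod_lt _ hb) (Nat.mod_lt _ hb) hcol'
      have hieq : i - 1 = i' - 1 := by
        rw [← Nat.div_add_mod (i - 1) b, ← Nat.div_add_mod (i' - 1) b, hud, hum]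
      have hjeq : j - 1 = j' - 1 := by
        rw [← Nat.div_add_mod (j - 1) m, ← Nat.div_add_mod (j' - 1) m, hxd, hxm]
      exact ⟨by omega, by omega⟩
    · -- SurjOn
      rintro ⟨r, c⟩ hrc
      simp only [Set.mem_prod, Set.mem_Icc] at hrc
      obtain ⟨⟨hr1, hr2⟩, hc1, hc2⟩ := hrc
      rw [hRmax] at hr2
      rw [hCmax] at hc2
      have hrlt : r - 1 < a * M := lt_of_lt_of_le (Nat.sub_lt hr1 one_pos) hr2
      have hclt : c - 1 < m * b := lt_of_lt_of_le (Nat.sub_lt hc1 one_pos) hc2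
      have hrd : (r - 1) / M < a := (Nat.div_lt_iff_lt_mul hM).mpr hrlt
      have hcd : (c - 1) / b < m := (Nat.div_lt_iff_lt_mul hb).mpr hclt
      refine ⟨((r - 1) % M * b + (c - 1) % b + 1, (r - 1) / M * m + (c - 1) / b + 1), ?_, ?_⟩
      · simp only [Set.mem_prod, Set.mem_Icc]
        refine ⟨⟨oneLe _ _, ?_⟩, oneLe _ _, ?_⟩
        · rw [hNM, mul_comm b M]
          exact upBound _ _ b M (Nat.mod_lt _ hM) (Nat.mod_lt _ hb)
        · rw [hnm]
          exact upBound _ _ m a hrd hcd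
      · have hi1 : 1 ≤ (r - 1) % M * b + (c - 1) % b + 1 := oneLe _ _
        have hj1 : 1 ≤ (r - 1) / M * m + (c - 1) / b + 1 := oneLe _ _
        simp only
        rw [rowNF N n b a _ _ M m hb ha hm hNM hnm hi1 hj1, colNF n b a _ _ m ha hnm]
        rw [Nat.add_sub_cancel, Nat.add_sub_cancel]
        have e1 : ((r - 1) / M * m + (c - 1) / b) / m = (r - 1) / M := by
          rw [mul_comm, Nat.mul_add_div hm, Nat.div_eq_of_lt hcd, Nat.add_zero]
        have e2 : ((r - 1) / M * m + (c - 1) / b) % m = (c - 1) / b := by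
          rw [mul_comm, Nat.mul_add_mod, Nat.mod_eq_of_lt hcd]
        have e3 : ((r - 1) % M * b + (c - 1) % b) / b = (r - 1) % M := by
          rw [mul_comm, Nat.mul_add_div hb, Nat.div_eq_of_lt (Nat.mod_lt _ hb), Nat.add_zero]
        have e4 : ((r - 1) % M * b + (c - 1) % b) % b = (c - 1) % b := by
          rw [mul_comm, Nat.mul_add_mod, Nat.mod_eq_of_lt (Nat.mod_lt _ hb)]
        rw [e1, e2, e3, e4]
        simp only [Prod.mk.injEq]
        constructor
        · rw [mul_comm, Nat.div_add_mod, Nat.sub_add_cancel hr1]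
        · rw [mul_comm, Nat.div_add_mod, Nat.sub_add_cancel hc1]
  · -- rectangle property
    intro i hi r₀ c₀ h w hh hw j hj j' hj' H H'
    simp only [Set.mem_Icc] at hi hj hj'
    rw [hMeq] at hh
    rw [rowNF N n b a i j M m hb ha hm hNM hnm hi.1 hj.1,
      colNF n b a i j m ha hnm] at H
    rw [rowNF N n b a i j' M m hb ha hm hNM hnm hi.1 hj'.1,
      colNF n b a i j' m ha hnm] at H'
    obtain ⟨hr, hrh, hc, hcw⟩ := H
    obtain ⟨hr', hrh', hc', hcw'⟩ := H'
    have W1 := window hh hr hrh hr' hrh'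
    have W2 := window hw hc hcw hc' hcw'
    have hxd : (j - 1) / m = (j' - 1) / m := eqOfClose _ _ M W1.1 W1.2
    have hxm : (j - 1) % m = (j' - 1) % m := eqOfClose _ _ b W2.1 W2.2
    have hjeq : j - 1 = j' - 1 := by
      rw [← Nat.div_add_mod (j - 1) m, ← Nat.div_add_mod (j' - 1) m, hxd, hxm]
    omega
end

section
/- Let N, n, b, a be positive integers with b dividing N and a dividing n, let F_q be a finite field, W a finite set, ψ : W → F_q^n an injective map such that any two distinct elements of ψ(W) differ in at least 2t+1 coordinates, and C_out ⊆ W^N any code. Interleave each concatenated codeword (ψ(c_1), …, ψ(c_N)), for c ∈ C_out, into a (Na/b) × (nb/a) array over F_q by placing the j-th coordinate of ψ(c_i) at row (⌈ja/n⌉ − 1)·(N/b) + ⌈i/b⌉ and column ((j−1) mod (n/a))·b + ((i−1) mod b) + 1. Then the resulting array code corrects any t rectangular bursts of size N/b × b: for all c, c′ ∈ C_out and all error arrays e, e′ whose supports are each covered by a union of t contiguous axis-aligned rectangles with at most N/b rows and at most b columns each, if the interleaved array of c plus e equals the interleaved array of c′ plus e′, then c = c′. -/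
/-- The Construction-IV interleaved array of the concatenated codeword
`(ψ(c_1), …, ψ(c_N))`: the `j`-th coordinate of `ψ(c_i)` is placed at row
`rowIdxIV N n b a i j` and column `colIdxIV n b a i j` (1-based); all other
positions are `0`. -/
def interleaveIV {F W : Type*} [Field F] (N n b a : ℕ) (ψ : W → Fin n → F)
    (c : Fin N → W) : ℕ → ℕ → F :=
  fun r col => ∑ i : Fin N, ∑ j : Fin n,
    if rowIdxIV N n b a ((i : ℕ) + 1) ((j : ℕ) + 1) = r ∧
        colIdxIV n b a ((i : ℕ) + 1) ((j : ℕ) + 1) = col then ψ (c i) j else 0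

/-- Support covered by a union of `t` contiguous axis-aligned rectangles with at
most `H` rows and at most `W` columns each. -/
def CoveredByRects {F : Type*} [Zero F] (t H W : ℕ) (e : ℕ → ℕ → F) : Prop :=
  ∃ r₀ c₀ h w : Fin t → ℕ, (∀ u, h u ≤ H ∧ w u ≤ W) ∧
    ∀ p q : ℕ, e p q ≠ 0 → ∃ u : Fin t,
      r₀ u ≤ p ∧ p < r₀ u + h u ∧ c₀ u ≤ q ∧ q < c₀ u + w u

lemma divHelpIV (n q r : ℕ) (hn : 0 < n) (hr : r < n) : (n * q + r) / n = q := by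
  rw [Nat.mul_add_div hn, Nat.div_eq_of_lt hr]; omega

lemma row_formulaIV (N n b a m s i j : ℕ) (hm : b * m = N) (hs : a * s = n)
    (ha : 0 < a) (hb : 0 < b) (hs0 : 0 < s) :
    rowIdxIV N n b a (i + 1) (j + 1) = (j / s) * m + i / b + 1 := by
  have hn0 : 0 < n := by rw [← hs]; positivity
  set β := j / s with hβ
  set r := j % s with hr
  have hrs : r < s := Nat.mod_lt _ hs0
  have hdm : s * β + r = j := Nat.div_add_mod j s
  have hK1 : 0 < (r + 1) * a := Nat.mul_pos (by omega) ha
  have hKn : (r + 1) * a ≤ n := by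
    rw [← hs, mul_comm a s]
    exact Nat.mul_le_mul_right a hrs
  have hnum : (j + 1) * a + n - 1 = n * (β + 1) + ((r + 1) * a - 1) := by
    have e1 : (j + 1) * a + n = n * (β + 1) + (r + 1) * a := by
      rw [← hdm, ← hs]; ring
    omega
  have hdiv : ((j + 1) * a + n - 1) / n = β + 1 := by
    rw [hnum, divHelpIV n (β + 1) _ hn0 (by omega)]
  have hNb : N / b = m := by rw [← hm, Nat.mul_div_cancel_left _ hb]
  have hib : i + 1 + b - 1 = i + b := by omega
  rw [rowIdxIV, hdiv, hNb, hib, Nat.add_div_right i hb, Nat.add_sub_cancel]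
  omega

lemma col_formulaIV (n b a m s i j : ℕ) (hs : a * s = n) (ha : 0 < a) :
    colIdxIV n b a (i + 1) (j + 1) = (j % s) * b + i % b + 1 := by
  have hna : n / a = s := by rw [← hs, Nat.mul_div_cancel_left _ ha]
  rw [colIdxIV, hna]
  simp

lemma split_uniqueIV (m x x' y y' : ℕ) (hy : y < m) (hy' : y' < m)
    (h : x * m + y = x' * m + y') : x = x' ∧ y = y' := by
  have h1 : (y + x * m) / m = x := by
    rw [Nat.add_mul_div_right _ _ (by omega : 0 < m), Nat.div_eq_of_lt hy]; omega
  have h2 : (y' + x' * m) / m = x' := by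
    rw [Nat.add_mul_div_right _ _ (by omega : 0 < m), Nat.div_eq_of_lt hy']; omega
  have hx : x = x' := by rw [← h1, ← h2]; congr 1; omega
  constructor
  · exact hx
  · subst hx; omega

lemma interval_uniqueIV (m h β₁ β₂ x r₀ : ℕ) (hh : h ≤ m)
    (H1 : r₀ ≤ β₁ * m + x) (H2 : β₁ * m + x < r₀ + h)
    (H3 : r₀ ≤ β₂ * m + x) (H4 : β₂ * m + x < r₀ + h) : β₁ = β₂ := by
  have hm : 0 < m := by
    rcases Nat.eq_zero_or_pos m with h0 | h0
    · omega
    · exact h0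
  have hA : β₂ * m < (β₁ + 1) * m := by rw [add_mul, one_mul]; linarith
  have hB : β₁ * m < (β₂ + 1) * m := by rw [add_mul, one_mul]; linarith
  have := Nat.lt_of_mul_lt_mul_right hA
  have := Nat.lt_of_mul_lt_mul_right hB
  omega

lemma cell_injIV (N n b a m s : ℕ) (hm : b * m = N) (hs : a * s = n)
    (ha : 0 < a) (hb : 0 < b) (hs0 : 0 < s)
    (i i' j j' : ℕ) (hi : i < N) (hi' : i' < N)
    (hrow : rowIdxIV N n b a (i + 1) (j + 1) = rowIdxIV N n b a (i' + 1) (j' + 1))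
    (hcol : colIdxIV n b a (i + 1) (j + 1) = colIdxIV n b a (i' + 1) (j' + 1)) :
    i = i' ∧ j = j' := by
  rw [row_formulaIV N n b a m s i j hm hs ha hb hs0,
      row_formulaIV N n b a m s i' j' hm hs ha hb hs0] at hrow
  rw [col_formulaIV n b a m s i j hs ha, col_formulaIV n b a m s i' j' hs ha] at hcol
  have hNmb : m * b = N := by rw [mul_comm]; exact hm
  have hib : i / b < m := by
    rw [Nat.div_lt_iff_lt_mul hb]; omega
  have hib' : i' / b < m := by
    rw [Nat.div_lt_iff_lt_mul hb]; omega
  have h1 := split_uniqueIV m (j / s) (j' / s) (i / b) (i' / b) hib hib' (by omega)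
  have h2 := split_uniqueIV b (j % s) (j' % s) (i % b) (i' % b)
      (Nat.mod_lt _ hb) (Nat.mod_lt _ hb) (by omega)
  have hdi := Nat.div_add_mod i b
  have hdi' := Nat.div_add_mod i' b
  have hdj := Nat.div_add_mod j s
  have hdj' := Nat.div_add_mod j' s
  constructor
  · have : b * (i / b) = b * (i' / b) := by rw [h1.2]
    omega
  · have : s * (j / s) = s * (j' / s) := by rw [h1.1]
    have h22 : j % s = j' % s := h2.1
    omega

lemma eval_interleaveIV {F W : Type*} [Field F] (N n b a m s : ℕ)
    (hm : b * m = N) (hs : a * s = n)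
    (ha : 0 < a) (hb : 0 < b) (hs0 : 0 < s)
    (ψ : W → Fin n → F) (c : Fin N → W) (i : Fin N) (j : Fin n) :
    interleaveIV N n b a ψ c (rowIdxIV N n b a ((i : ℕ) + 1) ((j : ℕ) + 1))
      (colIdxIV n b a ((i : ℕ) + 1) ((j : ℕ) + 1)) = ψ (c i) j := by
  unfold interleaveIV
  rw [Fintype.sum_eq_single i]
  · rw [Fintype.sum_eq_single j]
    · rw [if_pos ⟨rfl, rfl⟩]
    · intro j' hj'
      rw [if_neg]
      rintro ⟨hr, hc⟩
      exact hj' (Fin.ext (cell_injIV N n b a m s hm hs ha hb hs0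
        i i (j' : ℕ) (j : ℕ) i.isLt i.isLt hr hc).2)
  · intro i' hi'
    apply Finset.sum_eq_zero
    intro j' _
    rw [if_neg]
    rintro ⟨hr, hc⟩
    exact hi' (Fin.ext (cell_injIV N n b a m s hm hs ha hb hs0
      (i' : ℕ) (i : ℕ) (j' : ℕ) (j : ℕ) i'.isLt i.isLt hr hc).1)

lemma rect_uniqueIV (N n b a m s : ℕ) (hm : b * m = N) (hs : a * s = n)
    (ha : 0 < a) (hb : 0 < b) (hs0 : 0 < s)
    (i j₁ j₂ r₀ c₀ h w : ℕ) (hh : h ≤ m) (hw : w ≤ b)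
    (A1 : r₀ ≤ rowIdxIV N n b a (i + 1) (j₁ + 1))
    (A2 : rowIdxIV N n b a (i + 1) (j₁ + 1) < r₀ + h)
    (A3 : c₀ ≤ colIdxIV n b a (i + 1) (j₁ + 1))
    (A4 : colIdxIV n b a (i + 1) (j₁ + 1) < c₀ + w)
    (B1 : r₀ ≤ rowIdxIV N n b a (i + 1) (j₂ + 1))
    (B2 : rowIdxIV N n b a (i + 1) (j₂ + 1) < r₀ + h)
    (B3 : c₀ ≤ colIdxIV n b a (i + 1) (j₂ + 1))
    (B4 : colIdxIV n b a (i + 1) (j₂ + 1) < c₀ + w) : j₁ = j₂ := by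
  rw [row_formulaIV N n b a m s i j₁ hm hs ha hb hs0] at A1 A2
  rw [row_formulaIV N n b a m s i j₂ hm hs ha hb hs0] at B1 B2
  rw [col_formulaIV n b a m s i j₁ hs ha] at A3 A4
  rw [col_formulaIV n b a m s i j₂ hs ha] at B3 B4
  have hdiv : j₁ / s = j₂ / s :=
    interval_uniqueIV m h (j₁ / s) (j₂ / s) (i / b + 1) r₀ hh
      (by omega) (by omega) (by omega) (by omega)
  have hmod : j₁ % s = j₂ % s :=
    interval_uniqueIV b w (j₁ % s) (j₂ % s) (i % b + 1) c₀ hw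
      (by omega) (by omega) (by omega) (by omega)
  have hdj := Nat.div_add_mod j₁ s
  have hdj' := Nat.div_add_mod j₂ s
  have : s * (j₁ / s) = s * (j₂ / s) := by rw [hdiv]
  omega

/-- The Construction-IV interleaving of a concatenated code whose
inner code corrects `t` errors (distinct inner codewords differ in at least `2t+1`
positions) corrects any `t` rectangular bursts of size `N/b × b`. -/
theorem constructionIV_corrects_rect_bursts {F W : Type*}
    [Field F] [Fintype F] [DecidableEq F] [Fintype W] [DecidableEq W]
    (N n b a t : ℕ) (hN : 0 < N) (hn : 0 < n) (hb : 0 < b) (ha : 0 < a)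
    (hbN : b ∣ N) (han : a ∣ n)
    (ψ : W → Fin n → F) (hinj : Function.Injective ψ)
    (hψ : ∀ w w' : W, w ≠ w' → 2 * t + 1 ≤ hammingDist (ψ w) (ψ w'))
    (Cout : Set (Fin N → W)) :
    ∀ c ∈ Cout, ∀ c' ∈ Cout, ∀ e e' : ℕ → ℕ → F,
      CoveredByRects t (N / b) b e → CoveredByRects t (N / b) b e' →
      interleaveIV N n b a ψ c + e = interleaveIV N n b a ψ c' + e' → c = c' := by
  intro c hc c' hc' e e' hE hE' harr
  obtain ⟨m, hmN⟩ := hbN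
  obtain ⟨s, hsn⟩ := han
  have hm : b * m = N := hmN.symm
  have hs : a * s = n := hsn.symm
  have hm0 : 0 < m := by
    rcases Nat.eq_zero_or_pos m with h0 | h0
    · subst h0; simp at hmN; omega
    · exact h0
  have hs0 : 0 < s := by
    rcases Nat.eq_zero_or_pos s with h0 | h0
    · subst h0; simp at hsn; omega
    · exact h0
  have hNb : N / b = m := by rw [← hm, Nat.mul_div_cancel_left _ hb]
  funext i
  by_contra hne
  set B : Finset (Fin n) := Finset.univ.filter fun j => ψ (c i) j ≠ ψ (c' i) j with hBdef
  have hB : 2 * t + 1 ≤ B.card := by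
    have := hψ (c i) (c' i) hne
    rwa [hammingDist] at this
  obtain ⟨r₀, c₀, h, w, hhw, hcov⟩ := hE
  obtain ⟨r₀', c₀', h', w', hhw', hcov'⟩ := hE'
  set R : Fin n → ℕ := fun j => rowIdxIV N n b a ((i : ℕ) + 1) ((j : ℕ) + 1) with hR
  set C : Fin n → ℕ := fun j => colIdxIV n b a ((i : ℕ) + 1) ((j : ℕ) + 1) with hC
  have hval : ∀ j : Fin n,
      ψ (c i) j + e (R j) (C j) = ψ (c' i) j + e' (R j) (C j) := by
    intro j
    have h0 := congrFun (congrFun harr (R j)) (C j)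
    simp only [Pi.add_apply] at h0
    rwa [hR, hC, eval_interleaveIV N n b a m s hm hs ha hb hs0 ψ c i j,
        eval_interleaveIV N n b a m s hm hs ha hb hs0 ψ c' i j] at h0
  set P : Fin t ⊕ Fin t → ℕ → ℕ → Prop := fun v p q =>
    match v with
    | .inl u => r₀ u ≤ p ∧ p < r₀ u + h u ∧ c₀ u ≤ q ∧ q < c₀ u + w u
    | .inr u => r₀' u ≤ p ∧ p < r₀' u + h' u ∧ c₀' u ≤ q ∧ q < c₀' u + w' u
    with hP
  have key : ∀ j ∈ B, ∃ v : Fin t ⊕ Fin t, P v (R j) (C j) := by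
    intro j hj
    have hjne : ψ (c i) j ≠ ψ (c' i) j := (Finset.mem_filter.mp hj).2
    have hor : e (R j) (C j) ≠ 0 ∨ e' (R j) (C j) ≠ 0 := by
      by_contra hcon
      push_neg at hcon
      have := hval j
      rw [hcon.1, hcon.2, add_zero, add_zero] at this
      exact hjne this
    rcases hor with h0 | h0
    · obtain ⟨u, hu⟩ := hcov (R j) (C j) h0
      exact ⟨.inl u, hu⟩
    · obtain ⟨u, hu⟩ := hcov' (R j) (C j) h0
      exact ⟨.inr u, hu⟩
  obtain ⟨j₀, hj₀⟩ : B.Nonempty := Finset.card_pos.mp (by omega)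
  set v₀ : Fin t ⊕ Fin t := (key j₀ hj₀).choose with hv₀
  set f : Fin n → Fin t ⊕ Fin t :=
    fun j => if hj : j ∈ B then (key j hj).choose else v₀ with hf
  have hlt : (Finset.univ : Finset (Fin t ⊕ Fin t)).card < B.card := by
    rw [Finset.card_univ, Fintype.card_sum, Fintype.card_fin]
    omega
  obtain ⟨j₁, hj₁, j₂, hj₂, hne12, hfeq⟩ :=
    Finset.exists_ne_map_eq_of_card_lt_of_maps_to hlt
      (fun x _ => Finset.mem_univ (f x))
  have P₁ : P (f j₁) (R j₁) (C j₁) := by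
    rw [hf]; simp only [dif_pos hj₁]; exact (key j₁ hj₁).choose_spec
  have P₂ : P (f j₁) (R j₂) (C j₂) := by
    rw [hfeq, hf]; simp only [dif_pos hj₂]; exact (key j₂ hj₂).choose_spec
  rcases hv : f j₁ with u | u
  · rw [hv] at P₁ P₂
    obtain ⟨a1, a2, a3, a4⟩ := P₁
    obtain ⟨b1, b2, b3, b4⟩ := P₂
    have hhu : h u ≤ m := by have := (hhw u).1; omega
    exact hne12 (Fin.ext (rect_uniqueIV N n b a m s hm hs ha hb hs0
      (i : ℕ) (j₁ : ℕ) (j₂ : ℕ) (r₀ u) (c₀ u) (h u) (w u) hhu (hhw u).2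
      a1 a2 a3 a4 b1 b2 b3 b4))
  · rw [hv] at P₁ P₂
    obtain ⟨a1, a2, a3, a4⟩ := P₁
    obtain ⟨b1, b2, b3, b4⟩ := P₂
    have hhu : h' u ≤ m := by have := (hhw' u).1; omega
    exact hne12 (Fin.ext (rect_uniqueIV N n b a m s hm hs ha hb hs0
      (i : ℕ) (j₁ : ℕ) (j₂ : ℕ) (r₀' u) (c₀' u) (h' u) (w' u) hhu (hhw' u).2
      a1 a2 a3 a4 b1 b2 b3 b4))
end
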